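/- arXiv:2406.02031 — 6 statements merged into one kernel-verified Lean document; each statement's English description precedes it below -/
import Mathlib

section
/- Let F : (0,∞) → ℝ be convex and continuously differentiable, and suppose the one-sided limit of F(x) as x → 0⁺ exists and is finite. Then there exists x₀ > 0 such that for every x ∈ (0, x₀], F′(x) > −1/x. -/
/-!
For `0 < y < x`, convexity bounds the slope of `F` over `[y, x]` by `F' x`; letting `y → 0⁺`
gives `(F x - L) / x ≤ F' x`. Near `0` we have `F x - L > -1`, so `F' x > -1 / x` there.
-/

open Filter Set Topology

theorem ConvexOn.sub_div_sub_le_of_tendsto_nhdsGT {F : ℝ → ℝ} {a x L f' : ℝ}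
    (hconv : ConvexOn ℝ (Ioi a) F) (hlim : Tendsto F (𝓝[>] a) (𝓝 L)) (hax : a < x)
    (hF : HasDerivWithinAt F f' (Iio x) x) :
    (F x - L) / (x - a) ≤ f' := by
  have hslope : Tendsto (fun y ↦ slope F y x) (𝓝[>] a) (𝓝 ((F x - L) / (x - a))) := by
    simp only [slope_def_field]
    have hsub : Tendsto (fun y ↦ x - y) (𝓝[>] a) (𝓝 (x - a)) :=
      (tendsto_const_nhds.sub tendsto_id).mono_left nhdsWithin_le_nhds
    exact (tendsto_const_nhds.sub hlim).div hsub (sub_ne_zero.2 hax.ne')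
  refine le_of_tendsto hslope ?_
  filter_upwards [Ioo_mem_nhdsGT hax] with y hy
  exact hconv.slope_le_of_hasDerivWithinAt_Iio hy.1 hax hy.2 hF

theorem stmt0_general (F F' : ℝ → ℝ)
    (hconv : ConvexOn ℝ (Set.Ioi 0) F)
    (hderiv : ∀ x ∈ Set.Ioi (0:ℝ), HasDerivAt F (F' x) x)
    (L : ℝ) (hlim : Filter.Tendsto F (nhdsWithin 0 (Set.Ioi 0)) (nhds L)) :
    ∃ x₀ > (0:ℝ), ∀ x ∈ Set.Ioc (0:ℝ) x₀, F' x > -(1/x) := by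
  have hnear : ∀ᶠ x in 𝓝[>] (0 : ℝ), L - 1 < F x := hlim.eventually (lt_mem_nhds (by linarith))
  obtain ⟨x₀, hx₀, hsub⟩ := mem_nhdsGT_iff_exists_Ioc_subset.1 hnear
  refine ⟨x₀, hx₀, fun x hx ↦ ?_⟩
  have hbound := hconv.sub_div_sub_le_of_tendsto_nhdsGT hlim hx.1 (hderiv x hx.1).hasDerivWithinAt
  rw [sub_zero] at hbound
  calc -(1 / x) = -1 / x := by rw [neg_div]
    _ < (F x - L) / x := div_lt_div_of_pos_right (by linarith [show L - 1 < F x from hsub hx]) hx.1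
    _ ≤ F' x := hbound

/-- If `F : (0,∞) → ℝ` is convex and continuously differentiable (with derivative `F'`),
and `F(x)` has a finite one-sided limit as `x → 0⁺`, then there is `x₀ > 0` such that
`F'(x) > -1/x` for all `x ∈ (0, x₀]`. -/
theorem stmt0 (F F' : ℝ → ℝ)
    (hconv : ConvexOn ℝ (Set.Ioi 0) F)
    (hderiv : ∀ x ∈ Set.Ioi (0:ℝ), HasDerivAt F (F' x) x)
    (hcont : ContinuousOn F' (Set.Ioi 0))
    (L : ℝ) (hlim : Filter.Tendsto F (nhdsWithin 0 (Set.Ioi 0)) (nhds L)) :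
    ∃ x₀ > (0:ℝ), ∀ x ∈ Set.Ioc (0:ℝ) x₀, F' x > -(1/x) :=
  stmt0_general F F' hconv hderiv L hlim
end

section
/- Let F : (0,∞) → ℝ be convex and continuously differentiable. Then the following are equivalent: (i) F is bounded above on (0,1] and the derivative F′ is bounded above on (0,∞); (ii) there exist constants A ≥ 0 and B ≥ 0 such that |F(x)| ≤ A·x + B for all x > 0. -/
open Set

/-- For a convex, continuously differentiable `F : (0,∞) → ℝ` (with derivative `F'`):
`F` is bounded above on `(0,1]` and `F'` is bounded above on `(0,∞)` if and only if
there exist constants `A ≥ 0` and `B ≥ 0` with `|F(x)| ≤ A·x + B` for all `x > 0`. -/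
theorem stmt2 (F F' : ℝ → ℝ)
    (hconv : ConvexOn ℝ (Set.Ioi 0) F)
    (hderiv : ∀ x ∈ Set.Ioi (0:ℝ), HasDerivAt F (F' x) x)
    (hcont : ContinuousOn F' (Set.Ioi 0)) :
    ((∃ C, ∀ x ∈ Set.Ioc (0:ℝ) 1, F x ≤ C) ∧ (∃ C', ∀ x ∈ Set.Ioi (0:ℝ), F' x ≤ C'))
      ↔ (∃ A ≥ (0:ℝ), ∃ B ≥ (0:ℝ), ∀ x > (0:ℝ), |F x| ≤ A * x + B) := by
  have h1 : (1:ℝ) ∈ Ioi (0:ℝ) := by norm_num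
  constructor
  · rintro ⟨⟨C, hC⟩, ⟨C', hC'⟩⟩
    refine ⟨|F' 1| + |C'|, by positivity, |F 1| + |F' 1| + |C'| + |C|, by positivity, ?_⟩
    intro x hx
    have hxS : x ∈ Ioi (0:ℝ) := hx
    -- support line at 1 gives lower bound
    have hlow : F 1 + F' 1 * (x - 1) ≤ F x := by
      rcases lt_trichotomy x 1 with h | h | h
      · have hs := hconv.slope_le_of_hasDerivAt hxS h1 h (hderiv 1 h1)
        rw [slope_def_field, div_le_iff₀ (by linarith : (0:ℝ) < 1 - x)] at hs
        nlinarith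
      · simp [h]
      · have hs := hconv.le_slope_of_hasDerivAt h1 hxS h (hderiv 1 h1)
        rw [slope_def_field, le_div_iff₀ (by linarith : (0:ℝ) < x - 1)] at hs
        linarith
    have hup : F x ≤ |F 1| + (|F' 1| + |C'|) * x + |C| := by
      rcases le_or_gt x 1 with h | h
      · have hCx := hC x ⟨hx, h⟩
        have hA : 0 ≤ (|F' 1| + |C'|) * x := by positivity
        have := le_abs_self C
        linarith [abs_nonneg (F 1)]
      · have hs := hconv.slope_le_of_hasDerivAt h1 hxS h (hderiv x hxS)
        rw [slope_def_field, div_le_iff₀ (by linarith : (0:ℝ) < x - 1)] at hs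
        have hC'x := hC' x hxS
        have h2 : F x - F 1 ≤ C' * (x - 1) := by nlinarith
        have h3 : C' * (x - 1) ≤ |C'| * x := by
          nlinarith [le_abs_self C', abs_nonneg C']
        nlinarith [le_abs_self (F 1), abs_nonneg (F' 1), abs_nonneg C,
          mul_nonneg (abs_nonneg (F' 1)) (le_of_lt hx)]
    rw [abs_le]
    refine ⟨?_, ?_⟩
    · nlinarith [neg_abs_le (F 1), neg_abs_le (F' 1), le_abs_self (F' 1), abs_nonneg C',
        abs_nonneg C, mul_nonneg (abs_nonneg C') hx.le, abs_nonneg (F' 1),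
        mul_le_mul_of_nonneg_right (neg_abs_le (F' 1)) hx.le]
    · nlinarith [abs_nonneg (F' 1), abs_nonneg C']
  · rintro ⟨A, hA, B, hB, h⟩
    constructor
    · refine ⟨A + B, fun x hx => ?_⟩
      have := (h x hx.1)
      have := le_abs_self (F x)
      nlinarith [hx.2, hx.1]
    · refine ⟨A, fun x hx => ?_⟩
      by_contra hcon
      push_neg at hcon
      have hd0 : 0 < F' x - A := by linarith
      have hFx : F x ≤ A * x + B := le_trans (le_abs_self _) (h x hx)
      set c : ℝ := A * x + B - F x with hc
      have hc0 : 0 ≤ c := by linarith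
      set t : ℝ := (c + 1) / (F' x - A) with ht
      have ht0 : 0 < t := by positivity
      have hyS : x + t ∈ Ioi (0:ℝ) := by
        simp only [mem_Ioi] at hx ⊢; linarith
      have hs := hconv.le_slope_of_hasDerivAt hx hyS (by linarith : x < x + t) (hderiv x hx)
      rw [slope_def_field] at hs
      have hyx : x + t - x = t := by ring
      rw [hyx, le_div_iff₀ ht0] at hs
      have hFy : F (x + t) ≤ A * (x + t) + B :=
        le_trans (le_abs_self _) (h (x + t) hyS)
      have key : (F' x - A) * t ≤ c := by nlinarith
      have : (F' x - A) * t = c + 1 := by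
        rw [ht]; field_simp
      linarith
end

section
/- Let (Ω, 𝒜, μ) be a σ-finite measure space. Let f_P, f_Q and, for each i ∈ ℕ, f_{P_i}, f_{Q_i} be probability densities with respect to μ. Suppose (f_{P_i}) ratio-converges in measure to f_P and (f_{Q_i}) ratio-converges in measure to f_Q. Let F : (0,∞) → ℝ be convex and continuously differentiable with F(1) = 0, with finite limit as x → 0⁺, and with F′ bounded above on (0,∞). Then all the integrals ∫_Ω F(f_{Q_i}(x)/f_{P_i}(x)) f_{P_i}(x) dμ(x) and ∫_Ω F(f_Q(x)/f_P(x)) f_P(x) dμ(x) are well-defined and finite, and lim_{i→∞} ∫_Ω F(f_{Q_i}(x)/f_{P_i}(x)) f_{P_i}(x) dμ(x) = ∫_Ω F(f_Q(x)/f_P(x)) f_P(x) dμ(x). -/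
open MeasureTheory Filter Set Topology

/-!
A convex `F` with `F'` bounded above and a finite limit at `0⁺` grows at most linearly,
`|F t| ≤ A + B t`, so the integrand `F (q / p) * p` is dominated by `A p + B q`, whose integral
is the constant `A + B` along the whole sequence. Ratio convergence in measure is convergence in
measure of `f_i / f` for the measure with density `f`, which is equivalent to `μ`; hence every
subsequence has a further subsequence along which all densities converge `μ`-a.e. Along it the
integrands converge a.e., and dominated convergence with converging dominating integrals gives
the limit; the subsequence principle concludes.
-/

namespace ConvexOn

variable {S : Set ℝ} {f : ℝ → ℝ}

lemma add_mul_sub_le_of_hasDerivAt {f' x t : ℝ} (hf : ConvexOn ℝ S f) (hx : x ∈ S) (ht : t ∈ S)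
    (hd : HasDerivAt f f' x) : f x + f' * (t - x) ≤ f t := by
  rcases lt_trichotomy t x with htx | rfl | hxt
  · have := hf.slope_le_of_hasDerivAt ht hx htx hd
    rw [slope_def_field, div_le_iff₀ (sub_pos.2 htx)] at this
    linarith
  · simp
  · have := hf.le_slope_of_hasDerivAt hx ht hxt hd
    rw [slope_def_field, le_div_iff₀ (sub_pos.2 hxt)] at this
    linarith

lemma le_max_of_tendsto_nhdsGT_zero {L t y : ℝ} (hf : ConvexOn ℝ (Ioi 0) f)
    (hlim : Tendsto f (𝓝[>] 0) (𝓝 L)) (ht : 0 < t) (hty : t ≤ y) : f t ≤ max L (f y) := by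
  refine ge_of_tendsto (hlim.max tendsto_const_nhds) ?_
  filter_upwards [Ioo_mem_nhdsGT ht] with s hs
  exact hf.le_max_of_mem_Icc hs.1 (ht.trans_le hty) ⟨hs.2.le, hty⟩

lemma exists_abs_le_add_mul {f' : ℝ → ℝ} {C L : ℝ} (hf : ConvexOn ℝ (Ioi 0) f)
    (hd : ∀ x ∈ Ioi (0 : ℝ), HasDerivAt f (f' x) x) (hC : ∀ x ∈ Ioi (0 : ℝ), f' x ≤ C)
    (hlim : Tendsto f (𝓝[>] 0) (𝓝 L)) :
    ∃ A B : ℝ, ∀ t, 0 < t → |f t| ≤ A + B * t := by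
  have h1 : (1 : ℝ) ∈ Ioi 0 := mem_Ioi.2 one_pos
  refine ⟨|L| + |f 1| + |C| + |f' 1|, |C| + |f' 1|, fun t ht => abs_le.2 ⟨?_, ?_⟩⟩
  · have := hf.add_mul_sub_le_of_hasDerivAt h1 ht (hd 1 h1)
    nlinarith [abs_nonneg L, abs_nonneg C, neg_abs_le (f 1), neg_abs_le (f' 1), le_abs_self (f' 1)]
  · rcases le_total t 1 with ht1 | ht1
    · have := hf.le_max_of_tendsto_nhdsGT_zero hlim ht ht1
      nlinarith [abs_nonneg C, abs_nonneg (f' 1), max_le_max (le_abs_self L) (le_abs_self (f 1)),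
        max_le_add_of_nonneg (abs_nonneg L) (abs_nonneg (f 1))]
    · have := hf.add_mul_sub_le_of_hasDerivAt ht h1 (hd t ht)
      nlinarith [mul_le_mul_of_nonneg_right (hC t ht) (sub_nonneg.2 ht1), abs_nonneg L,
        le_abs_self C, neg_abs_le C, abs_nonneg (f' 1), le_abs_self (f 1)]

end ConvexOn

lemma abs_sub_max_neg_min_le {a b c : ℝ} (hab : |a| ≤ b) (hc : 0 ≤ c) :
    |a - max (-c) (min a c)| ≤ |b - c| := by
  rw [abs_le] at hab
  rcases min_cases a c with ⟨hmin, _⟩ | ⟨hmin, _⟩ <;>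
    rcases max_cases (-c) (min a c) with ⟨hmax, _⟩ | ⟨hmax, _⟩ <;>
    rw [hmax, abs_le] <;> (try rw [hmin]) <;> constructor <;>
    linarith [le_abs_self (b - c), neg_abs_le (b - c)]

section DominatedConvergence

variable {Ω : Type*} [MeasurableSpace Ω] {μ : Measure Ω} {g : ℕ → Ω → ℝ} {g₀ : Ω → ℝ}

theorem tendsto_integral_abs_sub_of_tendsto_integral (hg : ∀ n, Integrable (g n) μ)
    (hg₀ : Integrable g₀ μ) (hg_nonneg : ∀ n, ∀ᵐ x ∂μ, 0 ≤ g n x)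
    (hg_lim : ∀ᵐ x ∂μ, Tendsto (fun n => g n x) atTop (𝓝 (g₀ x)))
    (hg_int : Tendsto (fun n => ∫ x, g n x ∂μ) atTop (𝓝 (∫ x, g₀ x ∂μ))) :
    Tendsto (fun n => ∫ x, |g n x - g₀ x| ∂μ) atTop (𝓝 0) := by
  have hpos : ∀ n, Integrable (fun x => max (g₀ x - g n x) 0) μ := fun n =>
    (hg₀.sub (hg n)).pos_part
  have hneg : Tendsto (fun n => ∫ x, max (g₀ x - g n x) 0 ∂μ) atTop (𝓝 0) := by
    have := tendsto_integral_of_dominated_convergence (fun x => |g₀ x|)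
      (F := fun n x => max (g₀ x - g n x) 0) (f := fun _ => 0)
      (fun n => (hpos n).aestronglyMeasurable) hg₀.abs
      (fun n => (hg_nonneg n).mono fun x hx => by
        rw [Real.norm_of_nonneg (le_max_right _ _)]
        exact max_le (by linarith [le_abs_self (g₀ x)]) (abs_nonneg _))
      (hg_lim.mono fun x hx => by
        simpa using ((tendsto_const_nhds (x := g₀ x)).sub hx).max (tendsto_const_nhds (x := 0)))
    simpa using this
  have hsplit : ∀ n, ∫ x, |g n x - g₀ x| ∂μ
      = (∫ x, g n x ∂μ - ∫ x, g₀ x ∂μ) + 2 * ∫ x, max (g₀ x - g n x) 0 ∂μ := fun n => by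
    have : ∀ x, |g n x - g₀ x| = (g n x - g₀ x) + 2 * max (g₀ x - g n x) 0 := fun x => by
      rcases le_total (g n x) (g₀ x) with h | h
      · rw [abs_of_nonpos (by linarith), max_eq_left (by linarith)]; ring
      · rw [abs_of_nonneg (by linarith), max_eq_right (by linarith)]; ring
    simp_rw [this]
    have hdiff : Integrable (fun x => g n x - g₀ x) μ := (hg n).sub hg₀
    rw [integral_add hdiff ((hpos n).const_mul 2), integral_sub (hg n) hg₀,
      integral_const_mul]
  simp_rw [hsplit]
  simpa using (hg_int.sub_const (∫ x, g₀ x ∂μ)).add (hneg.const_mul 2)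

theorem tendsto_integral_of_abs_le_of_tendsto_integral {h : ℕ → Ω → ℝ} {h₀ : Ω → ℝ}
    (hh : ∀ n, AEStronglyMeasurable (h n) μ) (hg : ∀ n, Integrable (g n) μ)
    (hg₀ : Integrable g₀ μ) (hhg : ∀ n, ∀ᵐ x ∂μ, |h n x| ≤ g n x)
    (hh_lim : ∀ᵐ x ∂μ, Tendsto (fun n => h n x) atTop (𝓝 (h₀ x)))
    (hg_lim : ∀ᵐ x ∂μ, Tendsto (fun n => g n x) atTop (𝓝 (g₀ x)))
    (hg_int : Tendsto (fun n => ∫ x, g n x ∂μ) atTop (𝓝 (∫ x, g₀ x ∂μ))) :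
    Tendsto (fun n => ∫ x, h n x ∂μ) atTop (𝓝 (∫ x, h₀ x ∂μ)) := by
  have hh₀g₀ : ∀ᵐ x ∂μ, |h₀ x| ≤ g₀ x := by
    filter_upwards [ae_all_iff.2 hhg, hh_lim, hg_lim] with x hx hhx hgx
    exact le_of_tendsto_of_tendsto' hhx.abs hgx hx
  have hg₀_nonneg : ∀ᵐ x ∂μ, 0 ≤ g₀ x := hh₀g₀.mono fun x hx => (abs_nonneg _).trans hx
  -- Clipping `h n` to `[-g₀, g₀]` gives a sequence dominated by the fixed `g₀`, and moves it by at
  -- most `|g n - g₀|`, whose integral tends to zero by Scheffé's lemma.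
  set k : ℕ → Ω → ℝ := fun n x => max (-g₀ x) (min (h n x) (g₀ x))
  have hk_meas : ∀ n, AEStronglyMeasurable (k n) μ := fun n =>
    hg₀.aestronglyMeasurable.neg.sup ((hh n).inf hg₀.aestronglyMeasurable)
  have hk_le : ∀ n, ∀ᵐ x ∂μ, |k n x| ≤ g₀ x := fun n => by
    filter_upwards [hg₀_nonneg] with x hx
    exact abs_le.2 ⟨le_max_left _ _, max_le (by linarith) (min_le_right _ _)⟩
  have hk_int : Tendsto (fun n => ∫ x, k n x ∂μ) atTop (𝓝 (∫ x, h₀ x ∂μ)) := by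
    refine tendsto_integral_of_dominated_convergence g₀ hk_meas hg₀ hk_le ?_
    filter_upwards [hh_lim, hh₀g₀] with x hx hx₀
    have := (tendsto_const_nhds (x := -g₀ x)).max (hx.min (tendsto_const_nhds (x := g₀ x)))
    rwa [min_eq_left (abs_le.1 hx₀).2, max_eq_right (abs_le.1 hx₀).1] at this
  have hhk : ∀ n, |∫ x, h n x ∂μ - ∫ x, k n x ∂μ| ≤ ∫ x, |g n x - g₀ x| ∂μ := fun n => by
    have hh_int : Integrable (h n) μ := (hg n).mono' (hh n) (hhg n)
    have hk_int : Integrable (k n) μ := hg₀.mono' (hk_meas n) (hk_le n)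
    rw [← integral_sub hh_int hk_int]
    refine (abs_integral_le_integral_abs).trans (integral_mono_ae (hh_int.sub hk_int).abs
      ((hg n).sub hg₀).abs ?_)
    filter_upwards [hhg n, hg₀_nonneg] with x hx hx₀
    exact abs_sub_max_neg_min_le hx hx₀
  have hhk_lim :=
    squeeze_zero' (Eventually.of_forall fun n => abs_nonneg _) (Eventually.of_forall hhk)
    (tendsto_integral_abs_sub_of_tendsto_integral hg hg₀
      (fun n => (hhg n).mono fun x hx => (abs_nonneg _).trans hx) hg_lim hg_int)
  simpa using hk_int.add (tendsto_zero_iff_abs_tendsto_zero _ |>.2 hhk_lim)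

end DominatedConvergence

section Densities

variable {Ω : Type*} [MeasurableSpace Ω] {μ : Measure Ω}

def RatioTendstoInMeasure (μ : Measure Ω) (fi : ℕ → Ω → ℝ) (f : Ω → ℝ) : Prop :=
  ∀ ε > (0 : ℝ), Tendsto (fun i => ∫ x in {x | ε < |fi i x / f x - 1|}, f x ∂μ) atTop (𝓝 0)

namespace RatioTendstoInMeasure

variable {fi : ℕ → Ω → ℝ} {f : Ω → ℝ}

lemma comp (h : RatioTendstoInMeasure μ fi f) {ns : ℕ → ℕ} (hns : Tendsto ns atTop atTop) :
    RatioTendstoInMeasure μ (fun n => fi (ns n)) f :=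
  fun ε hε => (h ε hε).comp hns

variable [SFinite μ]

lemma tendstoInMeasure_withDensity (h : RatioTendstoInMeasure μ fi f) (hf : Integrable f μ)
    (hf_nonneg : ∀ᵐ x ∂μ, 0 ≤ f x) :
    TendstoInMeasure (μ.withDensity fun x => ENNReal.ofReal (f x))
      (fun i x => fi i x / f x) atTop (fun _ => 1) := by
  refine tendstoInMeasure_of_ne_top fun ε hε hε_top => ?_
  have hε' : 0 < ε.toReal / 2 := half_pos (ENNReal.toReal_pos hε.ne' hε_top)
  have hlim := (ENNReal.continuous_ofReal.tendsto 0).comp (h _ hε')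
  rw [ENNReal.ofReal_zero] at hlim
  refine tendsto_of_tendsto_of_tendsto_of_le_of_le tendsto_const_nhds hlim (fun i => bot_le)
    fun i => ?_
  rw [Function.comp_apply, ofReal_integral_eq_lintegral_ofReal hf.integrableOn
    (ae_restrict_of_ae hf_nonneg), ← withDensity_apply']
  refine measure_mono fun x hx => ?_
  simp only [mem_ofPred_eq, edist_dist, Real.dist_eq] at hx ⊢
  rw [ENNReal.le_ofReal_iff_toReal_le hε_top (abs_nonneg _)] at hx
  linarith

lemma exists_seq_tendsto_ae (h : RatioTendstoInMeasure μ fi f) (hf : Integrable f μ)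
    (hf_pos : ∀ᵐ x ∂μ, 0 < f x) :
    ∃ ns : ℕ → ℕ, StrictMono ns ∧ ∀ᵐ x ∂μ, Tendsto (fun n => fi (ns n) x) atTop (𝓝 (f x)) := by
  obtain ⟨ns, hns, hlim⟩ :=
    (h.tendstoInMeasure_withDensity hf (hf_pos.mono fun x hx => hx.le)).exists_seq_tendsto_ae
  have hac : μ ≪ μ.withDensity fun x => ENNReal.ofReal (f x) :=
    withDensity_absolutelyContinuous' hf.aemeasurable.ennreal_ofReal
      (hf_pos.mono fun x hx => by simpa using hx)
  refine ⟨ns, hns, ?_⟩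
  filter_upwards [hac.ae_le hlim, hf_pos] with x hx hx₀
  simpa [div_mul_cancel₀ _ hx₀.ne'] using hx.mul_const (f x)

end RatioTendstoInMeasure

section Divergence

variable {F : ℝ → ℝ} {A B : ℝ}

lemma abs_mul_comp_div_le (hF : ∀ t, 0 < t → |F t| ≤ A + B * t) {p q : ℝ} (hp : 0 < p)
    (hq : 0 < q) : |F (q / p) * p| ≤ A * p + B * q := by
  rw [abs_mul, abs_of_pos hp]
  calc |F (q / p)| * p ≤ (A + B * (q / p)) * p := by gcongr; exact hF _ (div_pos hq hp)
    _ = A * p + B * q := by field_simp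

lemma integrable_mul_comp_div (hF : ContinuousOn F (Ioi 0))
    (hFAB : ∀ t, 0 < t → |F t| ≤ A + B * t)
    {p q : Ω → ℝ} (hp : Integrable p μ) (hq : Integrable q μ) (hp_pos : ∀ᵐ x ∂μ, 0 < p x)
    (hq_pos : ∀ᵐ x ∂μ, 0 < q x) : Integrable (fun x => F (q x / p x) * p x) μ := by
  classical
  have hG : Measurable ((Ioi (0 : ℝ)).piecewise F fun _ => 0) :=
    hF.measurable_piecewise continuousOn_const measurableSet_Ioi
  have hmeas : AEStronglyMeasurable (fun x => F (q x / p x) * p x) μ := by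
    refine ((hG.comp_aemeasurable (hq.aemeasurable.div hp.aemeasurable)).mul
      hp.aemeasurable).aestronglyMeasurable.congr ?_
    filter_upwards [hp_pos, hq_pos] with x hpx hqx
    simp [piecewise_eq_of_mem _ _ _ (mem_Ioi.2 (div_pos hqx hpx))]
  refine ((hp.const_mul A).add (hq.const_mul B)).mono' hmeas ?_
  filter_upwards [hp_pos, hq_pos] with x hpx hqx
  exact abs_mul_comp_div_le hFAB hpx hqx

lemma tendsto_integral_mul_comp_div (hF : ContinuousOn F (Ioi 0))
    (hFAB : ∀ t, 0 < t → |F t| ≤ A + B * t) {p q : ℕ → Ω → ℝ} {p₀ q₀ : Ω → ℝ}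
    (hp : ∀ n, Integrable (p n) μ) (hq : ∀ n, Integrable (q n) μ) (hp₀ : Integrable p₀ μ)
    (hq₀ : Integrable q₀ μ) (hp_pos : ∀ n, ∀ᵐ x ∂μ, 0 < p n x) (hq_pos : ∀ n, ∀ᵐ x ∂μ, 0 < q n x)
    (hp₀_pos : ∀ᵐ x ∂μ, 0 < p₀ x) (hq₀_pos : ∀ᵐ x ∂μ, 0 < q₀ x)
    (hp_lim : ∀ᵐ x ∂μ, Tendsto (fun n => p n x) atTop (𝓝 (p₀ x)))
    (hq_lim : ∀ᵐ x ∂μ, Tendsto (fun n => q n x) atTop (𝓝 (q₀ x)))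
    (hp_int : Tendsto (fun n => ∫ x, p n x ∂μ) atTop (𝓝 (∫ x, p₀ x ∂μ)))
    (hq_int : Tendsto (fun n => ∫ x, q n x ∂μ) atTop (𝓝 (∫ x, q₀ x ∂μ))) :
    Tendsto (fun n => ∫ x, F (q n x / p n x) * p n x ∂μ) atTop
      (𝓝 (∫ x, F (q₀ x / p₀ x) * p₀ x ∂μ)) := by
  have hbound_int : ∀ {p q : Ω → ℝ}, Integrable p μ → Integrable q μ →
      ∫ x, (A * p x + B * q x) ∂μ = A * ∫ x, p x ∂μ + B * ∫ x, q x ∂μ := fun hp hq => by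
    rw [integral_add (hp.const_mul A) (hq.const_mul B), integral_const_mul, integral_const_mul]
  refine tendsto_integral_of_abs_le_of_tendsto_integral
    (g := fun n x => A * p n x + B * q n x) (g₀ := fun x => A * p₀ x + B * q₀ x)
    (fun n => (integrable_mul_comp_div hF hFAB (hp n) (hq n) (hp_pos n) (hq_pos n)).1)
    (fun n => ((hp n).const_mul A).add ((hq n).const_mul B))
    ((hp₀.const_mul A).add (hq₀.const_mul B))
    (fun n => ?_) ?_ ?_ ?_
  · filter_upwards [hp_pos n, hq_pos n] with x hpx hqx
    exact abs_mul_comp_div_le hFAB hpx hqx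
  · filter_upwards [hp_lim, hq_lim, hp₀_pos, hq₀_pos] with x hpx hqx hp₀x hq₀x
    exact ((hF.continuousAt (Ioi_mem_nhds (div_pos hq₀x hp₀x))).tendsto.comp
      (hqx.div hpx hp₀x.ne')).mul hpx
  · filter_upwards [hp_lim, hq_lim] with x hpx hqx
    exact (hpx.const_mul A).add (hqx.const_mul B)
  · simp only [hbound_int (hp _) (hq _), hbound_int hp₀ hq₀]
    exact (hp_int.const_mul A).add (hq_int.const_mul B)

end Divergence

end Densities

theorem stmt3_general {Ω : Type*} [MeasurableSpace Ω] (μ : Measure Ω) [SigmaFinite μ]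
    (fP fQ : Ω → ℝ) (fPi fQi : ℕ → Ω → ℝ)
    (hfPpos : ∀ᵐ x ∂μ, 0 < fP x) (hfPint : ∫ x, fP x ∂μ = 1)
    (hfQpos : ∀ᵐ x ∂μ, 0 < fQ x) (hfQint : ∫ x, fQ x ∂μ = 1)
    (hfPipos : ∀ i, ∀ᵐ x ∂μ, 0 < fPi i x)
    (hfPiint : ∀ i, ∫ x, fPi i x ∂μ = 1)
    (hfQipos : ∀ i, ∀ᵐ x ∂μ, 0 < fQi i x)
    (hfQiint : ∀ i, ∫ x, fQi i x ∂μ = 1)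
    (hPconv : ∀ ε > (0:ℝ),
      Tendsto (fun i => ∫ x in {x | ε < |fPi i x / fP x - 1|}, fP x ∂μ) atTop (nhds 0))
    (hQconv : ∀ ε > (0:ℝ),
      Tendsto (fun i => ∫ x in {x | ε < |fQi i x / fQ x - 1|}, fQ x ∂μ) atTop (nhds 0))
    (F F' : ℝ → ℝ)
    (hFconv : ConvexOn ℝ (Set.Ioi 0) F)
    (hFderiv : ∀ x ∈ Set.Ioi (0:ℝ), HasDerivAt F (F' x) x)
    (L₀ : ℝ) (hFlim : Tendsto F (nhdsWithin 0 (Set.Ioi 0)) (nhds L₀))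
    (C : ℝ) (hFbd : ∀ x ∈ Set.Ioi (0:ℝ), F' x ≤ C) :
    (∀ i, Integrable (fun x => F (fQi i x / fPi i x) * fPi i x) μ) ∧
    Integrable (fun x => F (fQ x / fP x) * fP x) μ ∧
    Tendsto (fun i => ∫ x, F (fQi i x / fPi i x) * fPi i x ∂μ) atTop
      (nhds (∫ x, F (fQ x / fP x) * fP x ∂μ)) := by
  have hP := integrable_of_integral_eq_one hfPint
  have hQ := integrable_of_integral_eq_one hfQint
  have hPi i := integrable_of_integral_eq_one (hfPiint i)
  have hQi i := integrable_of_integral_eq_one (hfQiint i)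
  have hFcont : ContinuousOn F (Ioi 0) := fun x hx =>
    (hFderiv x hx).continuousAt.continuousWithinAt
  obtain ⟨A, B, hFAB⟩ := hFconv.exists_abs_le_add_mul hFderiv hFbd hFlim
  refine ⟨fun i => integrable_mul_comp_div hFcont hFAB (hPi i) (hQi i) (hfPipos i) (hfQipos i),
    integrable_mul_comp_div hFcont hFAB hP hQ hfPpos hfQpos,
    tendsto_of_subseq_tendsto fun ns hns => ?_⟩
  have hPratio : RatioTendstoInMeasure μ fPi fP := hPconv
  have hQratio : RatioTendstoInMeasure μ fQi fQ := hQconv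
  obtain ⟨ms₁, hms₁, hP_lim⟩ := (hPratio.comp hns).exists_seq_tendsto_ae hP hfPpos
  obtain ⟨ms₂, hms₂, hQ_lim⟩ :=
    (hQratio.comp (hns.comp hms₁.tendsto_atTop)).exists_seq_tendsto_ae hQ hfQpos
  refine ⟨ms₁ ∘ ms₂, tendsto_integral_mul_comp_div hFcont hFAB (fun _ => hPi _) (fun _ => hQi _)
    hP hQ (fun _ => hfPipos _) (fun _ => hfQipos _) hfPpos hfQpos
    (hP_lim.mono fun x hx => hx.comp hms₂.tendsto_atTop) hQ_lim ?_ ?_⟩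
  · simpa only [Function.comp_apply, hfPiint, hfPint] using tendsto_const_nhds
  · simpa only [Function.comp_apply, hfQiint, hfQint] using tendsto_const_nhds

/-- Problem continuity of `f`-divergences: if probability densities `f_{P_i}` and
`f_{Q_i}` ratio-converge in measure to `f_P` and `f_Q` respectively, and
`F : (0,∞) → ℝ` is convex, continuously differentiable (with derivative `F'`),
satisfies `F(1) = 0`, has a finite limit at `0⁺` and `F'` bounded above, then all the
`f`-divergence integrals are well-defined and finite, and
`∫ F(f_{Q_i}/f_{P_i}) f_{P_i} dμ → ∫ F(f_Q/f_P) f_P dμ`. -/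
theorem stmt3 {Ω : Type*} [MeasurableSpace Ω] (μ : Measure Ω) [SigmaFinite μ]
    (fP fQ : Ω → ℝ) (fPi fQi : ℕ → Ω → ℝ)
    (hfPmeas : Measurable fP) (hfPpos : ∀ᵐ x ∂μ, 0 < fP x) (hfPint : ∫ x, fP x ∂μ = 1)
    (hfQmeas : Measurable fQ) (hfQpos : ∀ᵐ x ∂μ, 0 < fQ x) (hfQint : ∫ x, fQ x ∂μ = 1)
    (hfPimeas : ∀ i, Measurable (fPi i)) (hfPipos : ∀ i, ∀ᵐ x ∂μ, 0 < fPi i x)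
    (hfPiint : ∀ i, ∫ x, fPi i x ∂μ = 1)
    (hfQimeas : ∀ i, Measurable (fQi i)) (hfQipos : ∀ i, ∀ᵐ x ∂μ, 0 < fQi i x)
    (hfQiint : ∀ i, ∫ x, fQi i x ∂μ = 1)
    (hPconv : ∀ ε > (0:ℝ),
      Tendsto (fun i => ∫ x in {x | ε < |fPi i x / fP x - 1|}, fP x ∂μ) atTop (nhds 0))
    (hQconv : ∀ ε > (0:ℝ),
      Tendsto (fun i => ∫ x in {x | ε < |fQi i x / fQ x - 1|}, fQ x ∂μ) atTop (nhds 0))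
    (F F' : ℝ → ℝ)
    (hFconv : ConvexOn ℝ (Set.Ioi 0) F)
    (hFderiv : ∀ x ∈ Set.Ioi (0:ℝ), HasDerivAt F (F' x) x)
    (hFcont : ContinuousOn F' (Set.Ioi 0))
    (hF1 : F 1 = 0)
    (L₀ : ℝ) (hFlim : Tendsto F (nhdsWithin 0 (Set.Ioi 0)) (nhds L₀))
    (C : ℝ) (hFbd : ∀ x ∈ Set.Ioi (0:ℝ), F' x ≤ C) :
    (∀ i, Integrable (fun x => F (fQi i x / fPi i x) * fPi i x) μ) ∧
    Integrable (fun x => F (fQ x / fP x) * fP x) μ ∧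
    Tendsto (fun i => ∫ x, F (fQi i x / fPi i x) * fPi i x ∂μ) atTop
      (nhds (∫ x, F (fQ x / fP x) * fP x ∂μ)) :=
  stmt3_general μ fP fQ fPi fQi hfPpos hfPint hfQpos hfQint hfPipos hfPiint hfQipos hfQiint hPconv
    hQconv F F' hFconv hFderiv L₀ hFlim C hFbd
end

section
/- Let μ be a σ-finite measure on Ω, let f and g be probability densities with respect to μ, and let (f_i) and (g_i) be sequences of probability densities that ratio-converge in measure to f and g respectively. Then the likelihood-ratio quantile functions c[f_i, g_i] converge to c[f, g] in Lebesgue measure on (0,1): for every ε > 0, the Lebesgue measure of { t ∈ (0,1) : |c[f_i,g_i](t) − c[f,g](t)| > ε } tends to 0 as i → ∞. -/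
/-!
Write `F(r) = ∫_{f/g < r} g dμ` for the distribution function of the likelihood ratio `f/g`
under `g μ`, so that `c[f,g]` is the quantile function of `F`. Outside the set where
`|f_i/f - 1|` or `|g_i/g - 1|` exceeds `η`, the ratio `f_i/g_i` lies within the factor
`θ = (1+η)/(1-η)` of `f/g` and `g_i` within `1 ± η` of `g`; since the `g μ`-mass of that bad
set tends to `0` (its `f μ`-mass does, and `g μ ≪ f μ`), eventually
`F_i(r) ≤ F(θ r) + 3η` and `F(r) ≤ F_i(θ r) + 3η` for all `r`. Such a comparison pins the
quantile `c[f_i,g_i](t)` between `c[f,g](t - 3η) / θ` and `θ c[f,g](t + 3η)`, which gives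
convergence at every continuity point of the monotone function `c[f,g]`, so at almost every
`t`; on the finite measure space `(0,1)` this yields convergence in measure.
-/

open MeasureTheory Filter Set Topology

/-- The likelihood-ratio quantile function `c[f,g]` of two probability densities with
respect to `μ`: `c[f,g](t) = sup { r ≥ 0 : ∫_{f/g < r} g dμ < t }`, with `sup ∅ = 0`. -/
noncomputable def lrq {Ω : Type*} [MeasurableSpace Ω] (μ : Measure Ω)
    (f g : Ω → ℝ) (t : ℝ) : ℝ :=
  sSup {r : ℝ | 0 ≤ r ∧ ∫ x in {x | f x / g x < r}, g x ∂μ < t}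

section Quantile

noncomputable def quantile (F : ℝ → ℝ) (t : ℝ) : ℝ := sSup {r | 0 ≤ r ∧ F r < t}

variable {F G : ℝ → ℝ} {a c s t : ℝ}

lemma quantile_nonneg (F : ℝ → ℝ) (t : ℝ) : 0 ≤ quantile F t :=
  Real.sSup_nonneg fun _ hr => hr.1

lemma le_quantile (hbdd : BddAbove {r | 0 ≤ r ∧ F r < t}) {r : ℝ} (hr : 0 ≤ r) (hFr : F r < t) :
    r ≤ quantile F t :=
  le_csSup hbdd ⟨hr, hFr⟩

lemma quantile_mono (hbdd : BddAbove {r | 0 ≤ r ∧ F r < t}) (hst : s ≤ t) :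
    quantile F s ≤ quantile F t :=
  Real.sSup_le (fun _ hr => le_quantile hbdd hr.1 (hr.2.trans_le hst)) (quantile_nonneg F t)

lemma quantile_monotoneOn (hF : ∀ s < 1, BddAbove {r | 0 ≤ r ∧ F r < s}) :
    MonotoneOn (quantile F) (Iio 1) :=
  fun _ _ _ ht hst => quantile_mono (hF _ ht) hst

lemma quantile_le_mul_quantile (hc : 0 < c) (hbdd : BddAbove {r | 0 ≤ r ∧ F r < t + a})
    (h : ∀ r, F r ≤ G (c * r) + a) : quantile G t ≤ c * quantile F (t + a) := by
  refine Real.sSup_le (fun r hr => ?_) (mul_nonneg hc.le (quantile_nonneg F _))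
  have hFr : F (r / c) < t + a := by
    have := h (r / c)
    rw [mul_div_cancel₀ r hc.ne'] at this
    linarith [hr.2]
  have := le_quantile hbdd (div_nonneg hr.1 hc.le) hFr
  rwa [div_le_iff₀' hc] at this

variable {ι κ : Type*} {l : Filter ι} [l.NeBot] {L : Filter κ} {θ α : ι → ℝ} {Fi : κ → ℝ → ℝ}

lemma eventually_quantile_lt (hθ : Tendsto θ l (𝓝 1)) (hα : Tendsto α l (𝓝 0))
    (hF : ∀ s < 1, BddAbove {r | 0 ≤ r ∧ F r < s})
    (hclose : ∀ᶠ k in l, ∀ᶠ i in L, ∀ r, F r ≤ Fi i (θ k * r) + α k)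
    (ht : t < 1) (hcont : ContinuousAt (quantile F) t) {u : ℝ} (hu : quantile F t < u) :
    ∀ᶠ i in L, quantile (Fi i) t < u := by
  obtain ⟨s, ⟨hts, hs1⟩, hsu⟩ : ∃ s ∈ Ioo t 1, quantile F s < u :=
    (Filter.Eventually.and (Ioo_mem_nhdsGT ht)
      (nhdsWithin_le_nhds (hcont.eventually (eventually_lt_nhds hu)))).exists
  obtain ⟨k, hk, hαk, hθk, hθu⟩ : ∃ k, (∀ᶠ i in L, ∀ r, F r ≤ Fi i (θ k * r) + α k) ∧
      α k < s - t ∧ 0 < θ k ∧ θ k * quantile F s < u :=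
    (hclose.and <| (hα.eventually (eventually_lt_nhds (sub_pos.2 hts))).and <|
      (hθ.eventually (eventually_gt_nhds one_pos)).and <|
        (hθ.mul_const _).eventually (eventually_lt_nhds (by simpa using hsu))).exists
  filter_upwards [hk] with i hi
  calc quantile (Fi i) t ≤ θ k * quantile F (t + α k) :=
        quantile_le_mul_quantile hθk (hF _ (by linarith)) hi
    _ ≤ θ k * quantile F s :=
        mul_le_mul_of_nonneg_left (quantile_mono (hF s hs1) (by linarith)) hθk.le
    _ < u := hθu

lemma eventually_lt_quantile (hθ : Tendsto θ l (𝓝 1)) (hα : Tendsto α l (𝓝 0))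
    (hFi : ∀ i, ∀ s < 1, BddAbove {r | 0 ≤ r ∧ Fi i r < s})
    (hclose : ∀ᶠ k in l, ∀ᶠ i in L, ∀ r, Fi i r ≤ F (θ k * r) + α k)
    (ht : t < 1) (hcont : ContinuousAt (quantile F) t) {u : ℝ} (hu : u < quantile F t) :
    ∀ᶠ i in L, u < quantile (Fi i) t := by
  obtain ⟨s, hst, hsu⟩ : ∃ s < t, u < quantile F s :=
    (Filter.Eventually.and (self_mem_nhdsWithin : Iio t ∈ 𝓝[<] t)
      (nhdsWithin_le_nhds (hcont.eventually (eventually_gt_nhds hu)))).exists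
  obtain ⟨k, hk, hαk, hθk, hθu⟩ : ∃ k, (∀ᶠ i in L, ∀ r, Fi i r ≤ F (θ k * r) + α k) ∧
      α k < t - s ∧ 0 < θ k ∧ θ k * u < quantile F s :=
    (hclose.and <| (hα.eventually (eventually_lt_nhds (sub_pos.2 hst))).and <|
      (hθ.eventually (eventually_gt_nhds one_pos)).and <|
        (hθ.mul_const _).eventually (eventually_lt_nhds (by simpa using hsu))).exists
  filter_upwards [hk] with i hi
  refine lt_of_mul_lt_mul_left ?_ hθk.le
  calc θ k * u < quantile F s := hθu
    _ ≤ θ k * quantile (Fi i) (s + α k) :=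
        quantile_le_mul_quantile hθk (hFi i _ (by linarith)) hi
    _ ≤ θ k * quantile (Fi i) t :=
        mul_le_mul_of_nonneg_left (quantile_mono (hFi i t ht) (by linarith)) hθk.le

lemma ae_tendsto_quantile (hθ : Tendsto θ l (𝓝 1)) (hα : Tendsto α l (𝓝 0))
    (hF : ∀ s < 1, BddAbove {r | 0 ≤ r ∧ F r < s})
    (hFi : ∀ i, ∀ s < 1, BddAbove {r | 0 ≤ r ∧ Fi i r < s})
    (hclose : ∀ᶠ k in l, ∀ᶠ i in L, ∀ r,
      Fi i r ≤ F (θ k * r) + α k ∧ F r ≤ Fi i (θ k * r) + α k) :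
    ∀ᵐ t, t < 1 → Tendsto (fun i => quantile (Fi i) t) L (𝓝 (quantile F t)) := by
  have hD := measure_eq_zero_iff_ae_notMem.1
    ((quantile_monotoneOn hF).countable_not_continuousWithinAt.measure_zero volume)
  filter_upwards [hD] with t htD ht
  have hcont : ContinuousAt (quantile F) t := by
    by_contra hc
    exact htD ⟨ht, fun h => hc (h.continuousAt (Iio_mem_nhds ht))⟩
  refine tendsto_order.2 ⟨fun u hu => ?_, fun u hu => ?_⟩
  · exact eventually_lt_quantile hθ hα hFi
      (hclose.mono fun _ h => h.mono fun _ hi r => (hi r).1) ht hcont hu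
  · exact eventually_quantile_lt hθ hα hF
      (hclose.mono fun _ h => h.mono fun _ hi r => (hi r).2) ht hcont hu

end Quantile

lemma tendsto_measure_abs_sub_of_ae_tendsto {α : Type*} [MeasurableSpace α] {μ : Measure α}
    {s : Set α} (hs : MeasurableSet s) (hμs : μ s ≠ ⊤) {u : ℕ → α → ℝ} {v : α → ℝ}
    (hu : ∀ i, AEStronglyMeasurable (u i) (μ.restrict s))
    (h : ∀ᵐ x ∂μ.restrict s, Tendsto (fun i => u i x) atTop (𝓝 (v x))) {ε : ℝ} (hε : 0 < ε) :
    Tendsto (fun i => μ {x | x ∈ s ∧ ε < |u i x - v x|}) atTop (𝓝 0) := by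
  have := isFiniteMeasure_restrict.2 hμs
  refine tendsto_of_tendsto_of_tendsto_of_le_of_le tendsto_const_nhds
    (tendstoInMeasure_of_tendsto_ae hu h _ (ENNReal.ofReal_pos.2 hε)) (fun i => zero_le)
    fun i => ?_
  rw [Measure.restrict_apply' hs]
  refine measure_mono fun x hx => ⟨?_, hx.1⟩
  show ENNReal.ofReal ε ≤ edist (u i x) (v x)
  rw [edist_dist, Real.dist_eq]
  exact ENNReal.ofReal_le_ofReal hx.2.le

lemma div_le_mul_div_of_abs_div_sub_one_le {f g F G η : ℝ} (hf : 0 < f) (hg : 0 < g)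
    (hη : η < 1) (hF : |F / f - 1| ≤ η) (hG : |G / g - 1| ≤ η) :
    (F / G ≤ (1 + η) / (1 - η) * (f / g) ∧ (1 - η) * g ≤ G) ∧
      (f / g ≤ (1 + η) / (1 - η) * (F / G) ∧ (1 - η) * G ≤ g) := by
  obtain ⟨hF₁, hF₂⟩ := abs_le.1 hF
  obtain ⟨hG₁, hG₂⟩ := abs_le.1 hG
  have hfF : (1 - η) * f ≤ F := (le_div_iff₀ hf).1 (by linarith)
  have hFf : F ≤ (1 + η) * f := (div_le_iff₀ hf).1 (by linarith)
  have hgG : (1 - η) * g ≤ G := (le_div_iff₀ hg).1 (by linarith)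
  have hGg : G ≤ (1 + η) * g := (div_le_iff₀ hg).1 (by linarith)
  have h1η : 0 < 1 - η := by linarith
  have hF0 : 0 < F := (mul_pos h1η hf).trans_le hfF
  have hG0 : 0 < G := (mul_pos h1η hg).trans_le hgG
  refine ⟨⟨?_, hgG⟩, ?_, ?_⟩
  · rw [div_mul_div_comm, div_le_div_iff₀ hG0 (mul_pos h1η hg)]
    nlinarith [mul_le_mul_of_nonneg_left hgG hF0.le, mul_le_mul_of_nonneg_right hFf hG0.le]
  · rw [div_mul_div_comm, div_le_div_iff₀ hg (mul_pos h1η hG0)]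
    nlinarith [mul_le_mul_of_nonneg_right hfF hG0.le, mul_le_mul_of_nonneg_left hGg hF0.le]
  · nlinarith [mul_le_mul_of_nonneg_left hGg h1η.le, sq_nonneg η]

section LikelihoodRatio

variable {Ω : Type*} [MeasurableSpace Ω] {μ : Measure Ω}

lemma tendsto_setIntegral_zero_of_tendsto_setIntegral_pos {ι : Type*} {l : Filter ι}
    {f g : Ω → ℝ} (hf : Measurable f) (hfi : Integrable f μ) (hfpos : ∀ᵐ x ∂μ, 0 < f x)
    (hgi : Integrable g μ) {A : ι → Set Ω} (hA : ∀ i, MeasurableSet (A i))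
    (h : Tendsto (fun i => ∫ x in A i, f x ∂μ) l (𝓝 0)) :
    Tendsto (fun i => ∫ x in A i, g x ∂μ) l (𝓝 0) := by
  have hdens : Measurable fun x => ENNReal.ofReal (f x) := hf.ennreal_ofReal
  have hfin : ∀ᵐ x ∂μ, ENNReal.ofReal (f x) < ⊤ := ae_of_all _ fun _ => ENNReal.ofReal_lt_top
  have hsmul : (fun x => (ENNReal.ofReal (f x)).toReal • (g x / f x)) =ᵐ[μ] g :=
    hfpos.mono fun x hx => by
      simp [ENNReal.toReal_ofReal hx.le, mul_div_cancel₀ _ hx.ne']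
  -- `g = (g / f) • f`, and `g / f` is integrable against the measure `f μ`.
  have hint : Integrable (fun x => g x / f x) (μ.withDensity fun x => ENNReal.ofReal (f x)) :=
    (integrable_withDensity_iff_integrable_smul' hdens hfin).2 (hgi.congr hsmul.symm)
  have hA0 : Tendsto (fun i => μ.withDensity (fun x => ENNReal.ofReal (f x)) (A i)) l (𝓝 0) := by
    have heq : ∀ i, μ.withDensity (fun x => ENNReal.ofReal (f x)) (A i)
        = ENNReal.ofReal (∫ x in A i, f x ∂μ) := fun i => by
      rw [withDensity_apply _ (hA i), ofReal_integral_eq_lintegral_ofReal hfi.integrableOn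
        (ae_restrict_of_ae (hfpos.mono fun _ hx => hx.le))]
    simpa [heq, Function.comp_def] using (ENNReal.continuous_ofReal.tendsto 0).comp h
  refine (hint.tendsto_setIntegral_nhds_zero hA0).congr fun i => ?_
  rw [setIntegral_withDensity_eq_setIntegral_toReal_smul hdens (ae_restrict_of_ae hfin) _ (hA i)]
  exact setIntegral_congr_ae (hA i) (hsmul.mono fun x hx _ => hx)

lemma setIntegral_union_le {g : Ω → ℝ} {A B : Set Ω} (hA : MeasurableSet A)
    (hB : MeasurableSet B) (hg : Integrable g μ) (hg0 : 0 ≤ᵐ[μ] g) :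
    ∫ x in A ∪ B, g x ∂μ ≤ ∫ x in A, g x ∂μ + ∫ x in B, g x ∂μ := by
  rw [← union_sdiff_self,
    setIntegral_union disjoint_sdiff_self_right (hB.diff hA) hg.integrableOn hg.integrableOn]
  exact add_le_add le_rfl (setIntegral_mono_set hg.integrableOn (ae_restrict_of_ae hg0)
    (Eventually.of_forall fun _ hx => hx.1))

lemma setIntegral_add_mul_setIntegral_compl_le {g G : Ω → ℝ} {B : Set Ω} {c : ℝ}
    (hB : MeasurableSet B) (hg : Integrable g μ) (hG : Integrable G μ)
    (h : ∀ᵐ x ∂μ, x ∉ B → c * g x ≤ G x) :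
    ∫ x in B, G x ∂μ + c * ∫ x in Bᶜ, g x ∂μ ≤ ∫ x, G x ∂μ := by
  rw [← integral_add_compl hB hG, ← integral_const_mul]
  refine add_le_add le_rfl (setIntegral_mono_ae_restrict (hg.const_mul c).integrableOn
    hG.integrableOn ?_)
  exact (ae_restrict_iff' hB.compl).2 (h.mono fun x hx hxB => hx hxB)

noncomputable def lrcdf (μ : Measure Ω) (f g : Ω → ℝ) (r : ℝ) : ℝ :=
  ∫ x in {x | f x / g x < r}, g x ∂μ

lemma lrq_eq_quantile_lrcdf (μ : Measure Ω) (f g : Ω → ℝ) :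
    lrq μ f g = quantile (lrcdf μ f g) :=
  rfl

variable {f g F G : Ω → ℝ}

lemma lrcdf_le_integral (hg : Integrable g μ) (hg0 : 0 ≤ᵐ[μ] g) (r : ℝ) :
    lrcdf μ f g r ≤ ∫ x, g x ∂μ :=
  setIntegral_le_integral hg hg0

lemma lrcdf_mono (hg : Integrable g μ) (hg0 : 0 ≤ᵐ[μ] g) : Monotone (lrcdf μ f g) :=
  fun _ _ hrs => setIntegral_mono_set hg.integrableOn (ae_restrict_of_ae hg0)
    (Eventually.of_forall fun _ hx => lt_of_lt_of_le hx hrs)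

lemma tendsto_lrcdf_atTop (hf : Measurable f) (hgm : Measurable g) (hg : Integrable g μ) :
    Tendsto (lrcdf μ f g) atTop (𝓝 (∫ x, g x ∂μ)) := by
  have hU : (⋃ r : ℝ, {x | f x / g x < r}) = univ :=
    eq_univ_of_forall fun x => mem_iUnion.2 (exists_gt _)
  have := tendsto_setIntegral_of_monotone (μ := μ) (f := g)
    (s := fun r : ℝ => {x | f x / g x < r})
    (fun r => measurableSet_lt (hf.div hgm) measurable_const)
    (fun _ _ hrs x (hx : f x / g x < _) => hx.trans_le hrs) (by rw [hU]; exact hg.integrableOn)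
  rwa [hU, Measure.restrict_univ] at this

lemma bddAbove_lrcdf_lt (hf : Measurable f) (hgm : Measurable g) (hg0 : 0 ≤ᵐ[μ] g)
    (hg : ∫ x, g x ∂μ = 1) {t : ℝ} (ht : t < 1) :
    BddAbove {r | 0 ≤ r ∧ lrcdf μ f g r < t} := by
  have hgi : Integrable g μ := .of_integral_ne_zero (by simp [hg])
  obtain ⟨R, hR⟩ := ((tendsto_lrcdf_atTop hf hgm hgi).eventually
    (eventually_gt_nhds (hg ▸ ht))).exists
  exact ⟨R, fun r hr => ((lrcdf_mono hgi hg0).reflect_lt (hr.2.trans hR)).le⟩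

lemma mul_lrcdf_le_lrcdf_add {B : Set Ω} {θ c : ℝ} (hθ : 0 < θ) (hc : 0 ≤ c)
    (hB : MeasurableSet B) (hf : Measurable f) (hgm : Measurable g) (hg : Integrable g μ)
    (hg0 : 0 ≤ᵐ[μ] g) (hG : Integrable G μ) (hG0 : 0 ≤ᵐ[μ] G)
    (h : ∀ᵐ x ∂μ, x ∉ B → F x / G x ≤ θ * (f x / g x) ∧ c * g x ≤ G x) (r : ℝ) :
    c * lrcdf μ f g r ≤ lrcdf μ F G (θ * r) + c * ∫ x in B, g x ∂μ := by
  set E := {x | f x / g x < r}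
  have hE : MeasurableSet E := measurableSet_lt (hf.div hgm) measurable_const
  have hgood : ∫ x in E ∩ Bᶜ, c * g x ∂μ ≤ lrcdf μ F G (θ * r) := by
    refine (setIntegral_mono_ae_restrict (hg.const_mul c).integrableOn hG.integrableOn
      ((ae_restrict_iff' (hE.inter hB.compl)).2 (h.mono fun x hx hxE => (hx hxE.2).2))).trans
      (setIntegral_mono_set hG.integrableOn (ae_restrict_of_ae hG0) ?_)
    exact h.mono fun x hx (hxE : x ∈ E ∩ Bᶜ) =>
      (hx hxE.2).1.trans_lt (mul_lt_mul_of_pos_left hxE.1 hθ)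
  have hbad : ∫ x in E \ Bᶜ, g x ∂μ ≤ ∫ x in B, g x ∂μ :=
    setIntegral_mono_set hg.integrableOn (ae_restrict_of_ae hg0)
      (Eventually.of_forall fun _ hx => not_not.1 hx.2)
  calc c * lrcdf μ f g r = ∫ x in E ∩ Bᶜ, c * g x ∂μ + c * ∫ x in E \ Bᶜ, g x ∂μ := by
        rw [integral_const_mul, ← mul_add, integral_inter_add_sdiff hB.compl hg.integrableOn]
        rfl
    _ ≤ lrcdf μ F G (θ * r) + c * ∫ x in B, g x ∂μ :=
        add_le_add hgood (mul_le_mul_of_nonneg_left hbad hc)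

lemma measurableSet_ratio_deviation (hf : Measurable f) (hF : Measurable F) (η : ℝ) :
    MeasurableSet {x | η < |F x / f x - 1|} :=
  measurableSet_lt measurable_const ((hF.div hf).sub_const 1).abs

lemma lrcdf_le_lrcdf_add_of_setIntegral_le {η : ℝ} (hη0 : 0 ≤ η) (hη1 : η < 1)
    (hf : Measurable f) (hgm : Measurable g) (hF : Measurable F) (hGm : Measurable G)
    (hfpos : ∀ᵐ x ∂μ, 0 < f x) (hgpos : ∀ᵐ x ∂μ, 0 < g x) (hg : ∫ x, g x ∂μ = 1)
    (hG0 : 0 ≤ᵐ[μ] G) (hG : ∫ x, G x ∂μ = 1)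
    (hB : ∫ x in {x | η < |F x / f x - 1|} ∪ {x | η < |G x / g x - 1|}, g x ∂μ ≤ η) (r : ℝ) :
    lrcdf μ F G r ≤ lrcdf μ f g ((1 + η) / (1 - η) * r) + 3 * η ∧
      lrcdf μ f g r ≤ lrcdf μ F G ((1 + η) / (1 - η) * r) + 3 * η := by
  set B := {x | η < |F x / f x - 1|} ∪ {x | η < |G x / g x - 1|}
  have hBm : MeasurableSet B :=
    (measurableSet_ratio_deviation hf hF η).union (measurableSet_ratio_deviation hgm hGm η)
  have hgi : Integrable g μ := .of_integral_ne_zero (by simp [hg])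
  have hGi : Integrable G μ := .of_integral_ne_zero (by simp [hG])
  have hg0 : 0 ≤ᵐ[μ] g := hgpos.mono fun _ hx => hx.le
  have hθ : 0 < (1 + η) / (1 - η) := div_pos (by linarith) (by linarith)
  have hgood : ∀ᵐ x ∂μ, x ∉ B →
      (F x / G x ≤ (1 + η) / (1 - η) * (f x / g x) ∧ (1 - η) * g x ≤ G x) ∧
        (f x / g x ≤ (1 + η) / (1 - η) * (F x / G x) ∧ (1 - η) * G x ≤ g x) := by
    filter_upwards [hfpos, hgpos] with x hfx hgx hx
    simp only [B, mem_union, not_or] at hx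
    exact div_le_mul_div_of_abs_div_sub_one_le hfx hgx hη1 (not_lt.1 hx.1) (not_lt.1 hx.2)
  have hBg0 : 0 ≤ ∫ x in B, g x ∂μ := setIntegral_nonneg_of_ae_restrict (ae_restrict_of_ae hg0)
  have hBG : ∫ x in B, G x ∂μ ≤ 2 * η := by
    have := setIntegral_add_mul_setIntegral_compl_le hBm hgi hGi
      (hgood.mono fun x hx hxB => (hx hxB).1.2)
    rw [setIntegral_compl hBm hgi, hg, hG] at this
    nlinarith [mul_nonneg hη0 hBg0]
  have hBG0 : 0 ≤ ∫ x in B, G x ∂μ := setIntegral_nonneg_of_ae_restrict (ae_restrict_of_ae hG0)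
  have hFG := mul_lrcdf_le_lrcdf_add hθ (by linarith) hBm hF hGm hGi hG0 hgi hg0
    (hgood.mono fun x hx hxB => (hx hxB).2) r
  have hfg := mul_lrcdf_le_lrcdf_add hθ (by linarith) hBm hf hgm hgi hg0 hGi hG0
    (hgood.mono fun x hx hxB => (hx hxB).1) r
  have hFG1 : lrcdf μ F G r ≤ 1 := hG ▸ lrcdf_le_integral hGi hG0 r
  have hfg1 : lrcdf μ f g r ≤ 1 := hg ▸ lrcdf_le_integral hgi hg0 r
  constructor
  · nlinarith [mul_le_mul_of_nonneg_left hFG1 hη0, mul_nonneg hη0 hBG0]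
  · nlinarith [mul_le_mul_of_nonneg_left hfg1 hη0, mul_nonneg hη0 hBg0]

lemma eventually_lrcdf_le_lrcdf_add {fi gi : ℕ → Ω → ℝ}
    (hf : Measurable f) (hfpos : ∀ᵐ x ∂μ, 0 < f x) (hfint : ∫ x, f x ∂μ = 1)
    (hgm : Measurable g) (hgpos : ∀ᵐ x ∂μ, 0 < g x) (hgint : ∫ x, g x ∂μ = 1)
    (hfim : ∀ i, Measurable (fi i)) (hgim : ∀ i, Measurable (gi i))
    (hgipos : ∀ i, ∀ᵐ x ∂μ, 0 < gi i x) (hgiint : ∀ i, ∫ x, gi i x ∂μ = 1)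
    (hfconv : ∀ ε > (0:ℝ),
      Tendsto (fun i => ∫ x in {x | ε < |fi i x / f x - 1|}, f x ∂μ) atTop (𝓝 0))
    (hgconv : ∀ ε > (0:ℝ),
      Tendsto (fun i => ∫ x in {x | ε < |gi i x / g x - 1|}, g x ∂μ) atTop (𝓝 0)) :
    ∀ᶠ η in 𝓝[>] 0, ∀ᶠ i in atTop, ∀ r,
      lrcdf μ (fi i) (gi i) r ≤ lrcdf μ f g ((1 + η) / (1 - η) * r) + 3 * η ∧
        lrcdf μ f g r ≤ lrcdf μ (fi i) (gi i) ((1 + η) / (1 - η) * r) + 3 * η := by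
  filter_upwards [Ioo_mem_nhdsGT one_pos] with η hη
  have hfi : Integrable f μ := .of_integral_ne_zero (by simp [hfint])
  have hgi : Integrable g μ := .of_integral_ne_zero (by simp [hgint])
  have hg0 : 0 ≤ᵐ[μ] g := hgpos.mono fun _ hx => hx.le
  have hbad : Tendsto (fun i => ∫ x in {x | η < |fi i x / f x - 1|} ∪
      {x | η < |gi i x / g x - 1|}, g x ∂μ) atTop (𝓝 0) := by
    refine squeeze_zero (fun i => setIntegral_nonneg_of_ae_restrict (ae_restrict_of_ae hg0))
      (fun i => setIntegral_union_le (measurableSet_ratio_deviation hf (hfim i) η)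
        (measurableSet_ratio_deviation hgm (hgim i) η) hgi hg0) ?_
    simpa using (tendsto_setIntegral_zero_of_tendsto_setIntegral_pos hf hfi hfpos hgi
      (fun i => measurableSet_ratio_deviation hf (hfim i) η) (hfconv η hη.1)).add
      (hgconv η hη.1)
  filter_upwards [hbad.eventually (eventually_le_nhds hη.1)] with i hi
  exact lrcdf_le_lrcdf_add_of_setIntegral_le hη.1.le hη.2 hf hgm (hfim i) (hgim i) hfpos hgpos
    hgint ((hgipos i).mono fun _ hx => hx.le) (hgiint i) hi

end LikelihoodRatio

theorem stmt5_general {Ω : Type*} [MeasurableSpace Ω] (μ : Measure Ω)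
    (f g : Ω → ℝ) (fi gi : ℕ → Ω → ℝ)
    (hfmeas : Measurable f) (hfpos : ∀ᵐ x ∂μ, 0 < f x) (hfint : ∫ x, f x ∂μ = 1)
    (hgmeas : Measurable g) (hgpos : ∀ᵐ x ∂μ, 0 < g x) (hgint : ∫ x, g x ∂μ = 1)
    (hfimeas : ∀ i, Measurable (fi i))
    (hgimeas : ∀ i, Measurable (gi i)) (hgipos : ∀ i, ∀ᵐ x ∂μ, 0 < gi i x)
    (hgiint : ∀ i, ∫ x, gi i x ∂μ = 1)
    (hfconv : ∀ ε > (0:ℝ),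
      Tendsto (fun i => ∫ x in {x | ε < |fi i x / f x - 1|}, f x ∂μ) atTop (nhds 0))
    (hgconv : ∀ ε > (0:ℝ),
      Tendsto (fun i => ∫ x in {x | ε < |gi i x / g x - 1|}, g x ∂μ) atTop (nhds 0)) :
    ∀ ε > (0:ℝ),
      Tendsto (fun i =>
          volume {t : ℝ | t ∈ Set.Ioo (0:ℝ) 1 ∧ ε < |lrq μ (fi i) (gi i) t - lrq μ f g t|})
        atTop (nhds 0) := by
  intro ε hε
  have hbdd : ∀ s < 1, BddAbove {r | 0 ≤ r ∧ lrcdf μ f g r < s} :=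
    fun _ => bddAbove_lrcdf_lt hfmeas hgmeas (hgpos.mono fun _ hx => hx.le) hgint
  have hbddi : ∀ i, ∀ s < 1, BddAbove {r | 0 ≤ r ∧ lrcdf μ (fi i) (gi i) r < s} :=
    fun i _ => bddAbove_lrcdf_lt (hfimeas i) (hgimeas i) ((hgipos i).mono fun _ hx => hx.le)
      (hgiint i)
  have hθ : Tendsto (fun η : ℝ => (1 + η) / (1 - η)) (𝓝[>] 0) (𝓝 1) := by
    have : Tendsto (fun η : ℝ => (1 + η) / (1 - η)) (𝓝 0) (𝓝 ((1 + 0) / (1 - 0))) :=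
      (tendsto_const_nhds.add tendsto_id).div (tendsto_const_nhds.sub tendsto_id) (by norm_num)
    simpa using this.mono_left nhdsWithin_le_nhds
  have hα : Tendsto (fun η : ℝ => 3 * η) (𝓝[>] 0) (𝓝 0) := by
    simpa using (tendsto_id.const_mul (3 : ℝ)).mono_left (nhdsWithin_le_nhds (a := (0 : ℝ)))
  have hae := ae_tendsto_quantile hθ hα hbdd hbddi
    (eventually_lrcdf_le_lrcdf_add hfmeas hfpos hfint hgmeas hgpos hgint hfimeas hgimeas
      hgipos hgiint hfconv hgconv)
  simp only [lrq_eq_quantile_lrcdf]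
  refine tendsto_measure_abs_sub_of_ae_tendsto measurableSet_Ioo (by simp) (fun i => ?_)
    ((ae_restrict_iff' measurableSet_Ioo).2 (hae.mono fun t ht hti => ht hti.2)) hε
  exact (aemeasurable_restrict_of_monotoneOn measurableSet_Ioo
    ((quantile_monotoneOn (hbddi i)).mono Ioo_subset_Iio_self)).aestronglyMeasurable

/-- If the probability densities `f_i` and `g_i` ratio-converge in measure to `f` and
`g`, then the likelihood-ratio quantile functions `c[f_i,g_i]` converge to `c[f,g]` in
Lebesgue measure on `(0,1)`. -/
theorem stmt5 {Ω : Type*} [MeasurableSpace Ω] (μ : Measure Ω) [SigmaFinite μ]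
    (f g : Ω → ℝ) (fi gi : ℕ → Ω → ℝ)
    (hfmeas : Measurable f) (hfpos : ∀ᵐ x ∂μ, 0 < f x) (hfint : ∫ x, f x ∂μ = 1)
    (hgmeas : Measurable g) (hgpos : ∀ᵐ x ∂μ, 0 < g x) (hgint : ∫ x, g x ∂μ = 1)
    (hfimeas : ∀ i, Measurable (fi i)) (hfipos : ∀ i, ∀ᵐ x ∂μ, 0 < fi i x)
    (hfiint : ∀ i, ∫ x, fi i x ∂μ = 1)
    (hgimeas : ∀ i, Measurable (gi i)) (hgipos : ∀ i, ∀ᵐ x ∂μ, 0 < gi i x)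
    (hgiint : ∀ i, ∫ x, gi i x ∂μ = 1)
    (hfconv : ∀ ε > (0:ℝ),
      Tendsto (fun i => ∫ x in {x | ε < |fi i x / f x - 1|}, f x ∂μ) atTop (nhds 0))
    (hgconv : ∀ ε > (0:ℝ),
      Tendsto (fun i => ∫ x in {x | ε < |gi i x / g x - 1|}, g x ∂μ) atTop (nhds 0)) :
    ∀ ε > (0:ℝ),
      Tendsto (fun i =>
          volume {t : ℝ | t ∈ Set.Ioo (0:ℝ) 1 ∧ ε < |lrq μ (fi i) (gi i) t - lrq μ f g t|})
        atTop (nhds 0) :=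
  stmt5_general μ f g fi gi hfmeas hfpos hfint hgmeas hgpos hgint hfimeas hgimeas hgipos hgiint
    hfconv hgconv
end

section
/- Let (Ω, 𝒜, μ) be a σ-finite measure space, let Θ ⊆ ℝ^M be open, and let f : Θ × Ω → (0,∞) be such that for every θ₁ ∈ Θ the function f(θ₁,·) is measurable with ∫_Ω f(θ₁,x) dμ(x) = 1, and for μ-almost every x the map θ₁ ↦ f(θ₁,x) is twice continuously differentiable. Let F : (0,∞) → ℝ be twice continuously differentiable with F(1) = 0. Fix θ ∈ Θ and define D(θ₁) = ∫_Ω F(f(θ₁,x)/f(θ,x)) f(θ,x) dμ(x). Assume that for all indices i, j the second partial derivative ∂²D/∂θ₁(i)∂θ₁(j) at θ₁ = θ exists and equals the integral over Ω of the corresponding second partial derivative of the integrand (differentiation under the integral sign), and assume ∫_Ω ∂²f(θ₁,x)/∂θ₁(i)∂θ₁(j)|_{θ₁=θ} dμ(x) = 0. Then for all i, j: ∂²D/∂θ₁(i)∂θ₁(j)|_{θ₁=θ} = F″(1) · ∫_Ω (∂ log f(θ₁,x)/∂θ₁(i)|_{θ₁=θ}) · (∂ log f(θ₁,x)/∂θ₁(j)|_{θ₁=θ})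 · f(θ,x) dμ(x). That is, the Hessian of the f-divergence D at the diagonal equals F″(1) times the Fisher information matrix ℐ_θ of the family {f(θ₁,·)} at θ. -/
/-!
Differentiating the integrand `F (f θ₁ x / f θ x) * f θ x` twice at `θ₁ = θ`, where the ratio
equals `1`, gives `F''(1) · ∂ᵢ log f · ∂ⱼ log f · f + F'(1) · ∂ᵢ∂ⱼ f`. After integrating, the
second term vanishes because `∫ ∂ᵢ∂ⱼ f dμ = 0`, and the first is `F''(1)` times the Fisher
information.
-/

open MeasureTheory

/-- Partial derivative of `h : ℝ^M → ℝ` in the `i`-th coordinate direction at `y`. -/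
noncomputable def pd {M : ℕ} (i : Fin M) (h : (Fin M → ℝ) → ℝ) (y : Fin M → ℝ) : ℝ :=
  deriv (fun s : ℝ => h (y + s • (Pi.single i 1 : Fin M → ℝ))) 0

open Filter Topology

section PartialDerivatives

variable {M : ℕ} {i : Fin M} {g u v : (Fin M → ℝ) → ℝ} {y : Fin M → ℝ}

/- `pd i g y` is definitionally `lineDeriv ℝ g y (Pi.single i 1)`. -/

theorem Filter.EventuallyEq.pd_eq (h : u =ᶠ[𝓝 y] v) : pd i u y = pd i v y :=
  h.lineDeriv_eq

theorem DifferentiableAt.pd_eq_fderiv (hg : DifferentiableAt ℝ g y) :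
    pd i g y = fderiv ℝ g y (Pi.single i 1) :=
  hg.lineDeriv_eq_fderiv

theorem pd_mul (hu : DifferentiableAt ℝ u y) (hv : DifferentiableAt ℝ v y) :
    pd i (fun x => u x * v x) y = pd i u y * v y + u y * pd i v y := by
  have hmul : HasFDerivAt (fun x => u x * v x) (u y • fderiv ℝ v y + v y • fderiv ℝ u y) y :=
    hu.hasFDerivAt.mul hv.hasFDerivAt
  rw [hmul.differentiableAt.pd_eq_fderiv, hmul.fderiv, hu.pd_eq_fderiv, hv.pd_eq_fderiv]
  simp only [add_apply, smul_apply, smul_eq_mul]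
  ring

theorem pd_comp {φ : ℝ → ℝ} (hφ : DifferentiableAt ℝ φ (g y)) (hg : DifferentiableAt ℝ g y) :
    pd i (fun x => φ (g x)) y = deriv φ (g y) * pd i g y := by
  have hcomp : HasFDerivAt (fun x => φ (g x)) (deriv φ (g y) • fderiv ℝ g y) y :=
    hφ.hasDerivAt.comp_hasFDerivAt y hg.hasFDerivAt
  rw [hcomp.differentiableAt.pd_eq_fderiv, hcomp.fderiv, hg.pd_eq_fderiv]
  rfl

theorem pd_log (hg : DifferentiableAt ℝ g y) (hgy : g y ≠ 0) :
    pd i (fun x => Real.log (g x)) y = pd i g y / g y := by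
  rw [pd_comp (Real.differentiableAt_log hgy) hg, Real.deriv_log, inv_mul_eq_div]

theorem pd_div_const (hg : DifferentiableAt ℝ g y) (c : ℝ) :
    pd i (fun x => g x / c) y = pd i g y / c := by
  rw [pd_comp (φ := fun t => t / c) (by fun_prop) hg, deriv_div_const, deriv_id'', one_div,
    inv_mul_eq_div]

theorem ContDiffAt.differentiableAt_pd (hg : ContDiffAt ℝ 2 g y) :
    DifferentiableAt ℝ (pd i g) y := by
  have hpd : (fun x => fderiv ℝ g x (Pi.single i 1)) =ᶠ[𝓝 y] pd i g := by
    filter_upwards [hg.eventually (by simp)] with x hx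
    exact ((hx.differentiableAt (by simp)).pd_eq_fderiv).symm
  exact (((hg.fderiv_right (m := 1) (by norm_num)).differentiableAt (by simp)).clm_apply
    (differentiableAt_const _)).congr_of_eventuallyEq hpd.symm

end PartialDerivatives

theorem pd_pd_fDivergence_integrand {M : ℕ} {i j : Fin M} {g : (Fin M → ℝ) → ℝ}
    {y : Fin M → ℝ} {F : ℝ → ℝ} (hg : ContDiffAt ℝ 2 g y) (hgy : g y ≠ 0)
    (hF : ContDiffAt ℝ 2 F 1) :
    pd i (pd j (fun x => F (g x / g y) * g y)) y
      = deriv (deriv F) 1 *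
          (pd i (fun x => Real.log (g x)) y * pd j (fun x => Real.log (g x)) y * g y)
        + deriv F 1 * pd i (pd j g) y := by
  have hg₀ : DifferentiableAt ℝ g y := hg.differentiableAt (by simp)
  have hgd : ∀ᶠ x in 𝓝 y, DifferentiableAt ℝ g x := by
    filter_upwards [hg.eventually (by simp)] with x hx
    exact hx.differentiableAt (by simp)
  have hratio : Tendsto (fun x => g x / g y) (𝓝 y) (𝓝 1) := by
    simpa [div_self hgy] using (hg.continuousAt.div_const (g y)).tendsto
  have hFd : ∀ᶠ x in 𝓝 y, DifferentiableAt ℝ F (g x / g y) := by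
    filter_upwards [hratio.eventually (hF.eventually (by simp))] with x hx
    exact hx.differentiableAt (by simp)
  have hF'd : DifferentiableAt ℝ (deriv F) (g y / g y) := by
    rw [div_self hgy]
    exact (hF.derivWithin (m := 1) (by norm_num)).differentiableAt (by simp)
  have first_pd : pd j (fun x => F (g x / g y) * g y)
      =ᶠ[𝓝 y] fun x => deriv F (g x / g y) * pd j g x := by
    filter_upwards [hgd, hFd] with x hgx hFx
    rw [pd_comp (φ := fun t => F t * g y) (hFx.mul_const (g y)) (by fun_prop),
      deriv_mul_const hFx, pd_div_const hgx]
    field_simp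
  have second_pd : pd i (fun x => deriv F (g x / g y) * pd j g x) y
      = deriv (deriv F) 1 * (pd i g y / g y) * pd j g y + deriv F 1 * pd i (pd j g) y := by
    have hratio₀ : DifferentiableAt ℝ (fun x => g x / g y) y := by fun_prop
    rw [pd_mul (u := fun x => deriv F (g x / g y)) (by fun_prop) hg.differentiableAt_pd,
      pd_comp hF'd hratio₀, pd_div_const hg₀, div_self hgy]
  rw [first_pd.pd_eq, second_pd, pd_log hg₀ hgy, pd_log hg₀ hgy]
  field_simp

theorem stmt9_general {Ω : Type*} [MeasurableSpace Ω] (μ : Measure Ω)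
    (M : ℕ) (Θ : Set (Fin M → ℝ)) (hΘ : IsOpen Θ)
    (f : (Fin M → ℝ) → Ω → ℝ)
    (hpos : ∀ θ₁ ∈ Θ, ∀ x, 0 < f θ₁ x)
    (hsmooth : ∀ᵐ x ∂μ, ContDiffOn ℝ 2 (fun θ₁ => f θ₁ x) Θ)
    (F : ℝ → ℝ) (hF : ContDiffOn ℝ 2 F (Set.Ioi 0))
    (θ : Fin M → ℝ) (hθ : θ ∈ Θ)
    (D : (Fin M → ℝ) → ℝ)
    (hDUIint : ∀ i j : Fin M,
      Integrable (fun x => pd i (pd j (fun θ₁ => F (f θ₁ x / f θ x) * f θ x)) θ) μ ∧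
      Integrable (fun x => pd i (pd j (fun θ₁ => f θ₁ x)) θ) μ ∧
      Integrable (fun x =>
        pd i (fun θ₁ => Real.log (f θ₁ x)) θ * pd j (fun θ₁ => Real.log (f θ₁ x)) θ *
          f θ x) μ)
    (hDUI : ∀ i j : Fin M,
      pd i (pd j D) θ
        = ∫ x, pd i (pd j (fun θ₁ => F (f θ₁ x / f θ x) * f θ x)) θ ∂μ)
    (hzero : ∀ i j : Fin M, ∫ x, pd i (pd j (fun θ₁ => f θ₁ x)) θ ∂μ = 0) :
    ∀ i j : Fin M,
      pd i (pd j D) θ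
        = deriv (deriv F) 1 *
            ∫ x, pd i (fun θ₁ => Real.log (f θ₁ x)) θ *
                  pd j (fun θ₁ => Real.log (f θ₁ x)) θ * f θ x ∂μ := by
  intro i j
  obtain ⟨-, hI₂, hI₃⟩ := hDUIint i j
  have hpointwise : ∀ᵐ x ∂μ,
      pd i (pd j (fun θ₁ => F (f θ₁ x / f θ x) * f θ x)) θ
        = deriv (deriv F) 1 *
            (pd i (fun θ₁ => Real.log (f θ₁ x)) θ * pd j (fun θ₁ => Real.log (f θ₁ x)) θ *
              f θ x)
          + deriv F 1 * pd i (pd j (fun θ₁ => f θ₁ x)) θ := by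
    filter_upwards [hsmooth] with x hx
    exact pd_pd_fDivergence_integrand (hx.contDiffAt (hΘ.mem_nhds hθ)) (hpos θ hθ x).ne'
      (hF.contDiffAt (Ioi_mem_nhds one_pos))
  rw [hDUI i j, integral_congr_ae hpointwise, integral_add (hI₃.const_mul _) (hI₂.const_mul _),
    integral_const_mul, integral_const_mul, hzero i j, mul_zero, add_zero]

/-- The Hessian (at the diagonal) of a smooth `f`-divergence
`D(θ₁) = ∫ F(f(θ₁,x)/f(θ,x)) f(θ,x) dμ` equals `F''(1)` times the Fisher information
matrix: assuming differentiation under the integral sign is valid for the second partial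
derivatives and `∫ ∂²f/∂θ₁(i)∂θ₁(j)|_{θ₁=θ} dμ = 0`, we have
`∂²D/∂θ₁(i)∂θ₁(j)|_{θ₁=θ} = F''(1) · ∫ (∂ᵢ log f)(∂ⱼ log f) f(θ,·) dμ`. -/
theorem stmt9 {Ω : Type*} [MeasurableSpace Ω] (μ : Measure Ω) [SigmaFinite μ]
    (M : ℕ) (Θ : Set (Fin M → ℝ)) (hΘ : IsOpen Θ)
    (f : (Fin M → ℝ) → Ω → ℝ)
    (hpos : ∀ θ₁ ∈ Θ, ∀ x, 0 < f θ₁ x)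
    (hmeas : ∀ θ₁ ∈ Θ, Measurable (f θ₁))
    (hint : ∀ θ₁ ∈ Θ, ∫ x, f θ₁ x ∂μ = 1)
    (hsmooth : ∀ᵐ x ∂μ, ContDiffOn ℝ 2 (fun θ₁ => f θ₁ x) Θ)
    (F : ℝ → ℝ) (hF : ContDiffOn ℝ 2 F (Set.Ioi 0)) (hF1 : F 1 = 0)
    (θ : Fin M → ℝ) (hθ : θ ∈ Θ)
    (D : (Fin M → ℝ) → ℝ)
    (hD : ∀ θ₁ ∈ Θ, D θ₁ = ∫ x, F (f θ₁ x / f θ x) * f θ x ∂μ)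
    (hDUIint : ∀ i j : Fin M,
      Integrable (fun x => pd i (pd j (fun θ₁ => F (f θ₁ x / f θ x) * f θ x)) θ) μ ∧
      Integrable (fun x => pd i (pd j (fun θ₁ => f θ₁ x)) θ) μ ∧
      Integrable (fun x =>
        pd i (fun θ₁ => Real.log (f θ₁ x)) θ * pd j (fun θ₁ => Real.log (f θ₁ x)) θ *
          f θ x) μ)
    (hDUI : ∀ i j : Fin M,
      pd i (pd j D) θ
        = ∫ x, pd i (pd j (fun θ₁ => F (f θ₁ x / f θ x) * f θ x)) θ ∂μ)
    (hzero : ∀ i j : Fin M, ∫ x, pd i (pd j (fun θ₁ => f θ₁ x)) θ ∂μ = 0) :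
    ∀ i j : Fin M,
      pd i (pd j D) θ
        = deriv (deriv F) 1 *
            ∫ x, pd i (fun θ₁ => Real.log (f θ₁ x)) θ *
                  pd j (fun θ₁ => Real.log (f θ₁ x)) θ * f θ x ∂μ :=
  stmt9_general μ M Θ hΘ f hpos hsmooth F hF θ hθ D hDUIint hDUI hzero
end

section
/- Let X be a countable set and let P, Q : X → ℝ be probability mass functions with Q(x′) > 0 for every x′ ∈ X. Fix γ ∈ [0,1] and let R = γP + (1−γ)Q (so R(x′) = γP(x′) + (1−γ)Q(x′)). For x ∈ X, let X_z = { x′ ∈ X : P(x′)/Q(x′) = P(x)/Q(x) } be the level set of the likelihood ratio through x. Then, provided R(X_z) > 0, one has R(x)/R(X_z) = Q(x)/Q(X_z). In particular, the conditional distribution on the likelihood-ratio level set X_z induced by the mixture R does not depend on the mixing weight γ. -/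
/-- For pmfs `P, Q` on a countable set `X` with `Q > 0` everywhere, and a mixture
`R = γP + (1-γ)Q`, the conditional distribution of `R` on each level set
`X_z = {x' : P x'/Q x' = P x/Q x}` of the likelihood ratio coincides with that of `Q`
(whenever `R(X_z) > 0`); in particular it does not depend on `γ`. -/
theorem stmt13 {X : Type*} [Countable X] (P Q : X → ℝ)
    (hP0 : ∀ x', 0 ≤ P x') (hPsum : ∑' x', P x' = 1)
    (hQ0 : ∀ x', 0 < Q x') (hQsum : ∑' x', Q x' = 1)
    (γ : ℝ) (hγ : γ ∈ Set.Icc (0:ℝ) 1)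
    (R : X → ℝ) (hR : ∀ x', R x' = γ * P x' + (1 - γ) * Q x')
    (x : X)
    (hRz : 0 < ∑' x' : {x' : X // P x' / Q x' = P x / Q x}, R x') :
    R x / (∑' x' : {x' : X // P x' / Q x' = P x / Q x}, R x')
      = Q x / (∑' x' : {x' : X // P x' / Q x' = P x / Q x}, Q x') := by
  set c : ℝ := P x / Q x with hc
  set k : ℝ := γ * c + (1 - γ) with hk
  -- on the level set, R x' = k * Q x'
  have hRk : ∀ x' : {x' : X // P x' / Q x' = c}, R x'.1 = k * Q x'.1 := by
    rintro ⟨x', hx'⟩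
    have hP' : P x' = c * Q x' := by
      field_simp at hx'
      rw [div_eq_iff (ne_of_gt (hQ0 x'))] at hx' <;> simp_all
    simp only [hR, hP', hk]
    ring
  have hQsummable : Summable Q := by
    by_contra h
    rw [tsum_eq_zero_of_not_summable h] at hQsum
    norm_num at hQsum
  have hQsub : Summable fun x' : {x' : X // P x' / Q x' = c} => Q x'.1 :=
    hQsummable.subtype _
  have htsumR : (∑' x' : {x' : X // P x' / Q x' = c}, R x'.1)
      = k * ∑' x' : {x' : X // P x' / Q x' = c}, Q x'.1 := by
    rw [← tsum_mul_left]
    exact tsum_congr hRk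
  have hSpos : 0 < ∑' x' : {x' : X // P x' / Q x' = c}, Q x'.1 := by
    have hmem : (⟨x, rfl⟩ : {x' : X // P x' / Q x' = c}) ∈ Set.univ := trivial
    calc (0:ℝ) < Q x := hQ0 x
      _ ≤ _ := Summable.le_tsum hQsub ⟨x, rfl⟩ (fun b _ => (hQ0 b.1).le)
  have hkpos : 0 < k := by
    rw [htsumR] at hRz
    by_contra h
    push_neg at h
    nlinarith
  have hRx : R x = k * Q x := hRk ⟨x, rfl⟩
  rw [htsumR, hRx, mul_div_mul_left _ _ (ne_of_gt hkpos)]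
end
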